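/- Let β ∈ (0, 0.1] and let K^u_β be the cone { c₁(1,−β) + c₂(1,1+2β) : c₁c₂ ≥ 0 } ⊂ ℝ². Set μ̄_β := √((1−β)² + 1)/√(β² + 1). Then μ̄_β > 1, and for every natural number a ≥ 1 and every v ∈ K^u_β, one has μ̄_β·|v| ≤ |A_a v| ≤ μ^u(a)·|v|, where A_a = [[a,1],[1,0]] and μ^u(a) = (a + √(4+a²))/2. -/

import Mathlib

/-!
`A_a` is symmetric with eigenvalues `μ` and `-1/μ`, where `μ = μᵘ(a)` is the positive root of
`μ² = aμ + 1`; the upper bound is the identity `μ (μ² |v|² - |A_a v|²) = a (v₀ - μ v₁)²`.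
For the lower bound, `|A_a v|` increases with `a` on the cone, so it suffices to take `a = 1`.
The quadratic form `(β² + 1) |A_1 v|² - ((1 - β)² + 1) |v|²` vanishes on the edge `(1, -β)` of the
cone, and in the coordinates `c₁, c₂` it equals
`2 (1 + 4β + 2β² - 3β³) c₁ c₂ + (1 + 4β + 7β² + 12β³) c₂²`, which is nonnegative when `c₁ c₂ ≥ 0`.
-/

/-- The cone `K^u_β = { c₁(1,−β) + c₂(1,1+2β) : c₁c₂ ≥ 0 } ⊂ ℝ²`. -/
def Ku (β : ℝ) : Set (Fin 2 → ℝ) :=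
  {v | ∃ c₁ c₂ : ℝ, c₁ * c₂ ≥ 0 ∧ v = c₁ • ![1, -β] + c₂ • ![1, 1 + 2 * β]}

/-- The Euclidean norm on `ℝ²`. -/
noncomputable def enorm2 (v : Fin 2 → ℝ) : ℝ := Real.sqrt (v 0 ^ 2 + v 1 ^ 2)

open Matrix

noncomputable def muU (a : ℝ) : ℝ := (a + √(4 + a ^ 2)) / 2

noncomputable def muBar (β : ℝ) : ℝ := √((1 - β) ^ 2 + 1) / √(β ^ 2 + 1)

lemma mul_sqrt_le_sqrt {c X Y : ℝ} (hc : 0 ≤ c) (h : c ^ 2 * X ≤ Y) : c * √X ≤ √Y := by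
  rw [← Real.sqrt_sq hc, ← Real.sqrt_mul (sq_nonneg c)]
  exact Real.sqrt_le_sqrt h

lemma sqrt_le_mul_sqrt {c X Y : ℝ} (hc : 0 ≤ c) (h : Y ≤ c ^ 2 * X) : √Y ≤ c * √X := by
  rw [← Real.sqrt_sq hc, ← Real.sqrt_mul (sq_nonneg c)]
  exact Real.sqrt_le_sqrt h

lemma enorm2_mulVec (a : ℝ) (v : Fin 2 → ℝ) :
    enorm2 (!![a, 1; 1, 0] *ᵥ v) = √((a * v 0 + v 1) ^ 2 + v 0 ^ 2) := by
  simp [enorm2, mulVec, dotProduct]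

lemma muU_pos {a : ℝ} (ha : 0 ≤ a) : 0 < muU a := by
  unfold muU
  positivity

lemma muU_sq (a : ℝ) : muU a ^ 2 = a * muU a + 1 := by
  unfold muU
  linear_combination Real.sq_sqrt (by positivity : (0 : ℝ) ≤ 4 + a ^ 2) / 4

lemma sq_add_sq_le_of_sq_eq {a μ : ℝ} (ha : 0 ≤ a) (hμ : 0 < μ) (hμa : μ ^ 2 = a * μ + 1)
    (x y : ℝ) : (a * x + y) ^ 2 + x ^ 2 ≤ μ ^ 2 * (x ^ 2 + y ^ 2) := by
  have key : μ * (μ ^ 2 * (x ^ 2 + y ^ 2) - ((a * x + y) ^ 2 + x ^ 2)) = a * (x - μ * y) ^ 2 := by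
    linear_combination (x ^ 2 * (μ + a) + y ^ 2 * μ) * hμa
  have : 0 ≤ μ * (μ ^ 2 * (x ^ 2 + y ^ 2) - ((a * x + y) ^ 2 + x ^ 2)) :=
    key ▸ mul_nonneg ha (sq_nonneg _)
  exact sub_nonneg.1 (nonneg_of_mul_nonneg_right this hμ)

lemma enorm2_mulVec_le {a : ℝ} (ha : 0 ≤ a) (v : Fin 2 → ℝ) :
    enorm2 (!![a, 1; 1, 0] *ᵥ v) ≤ muU a * enorm2 v := by
  rw [enorm2_mulVec, enorm2]
  exact sqrt_le_mul_sqrt (muU_pos ha).le (sq_add_sq_le_of_sq_eq ha (muU_pos ha) (muU_sq a) _ _)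

lemma one_lt_muBar {β : ℝ} (hβ : β < 1 / 2) : 1 < muBar β := by
  rw [muBar, one_lt_div (by positivity)]
  exact Real.sqrt_lt_sqrt (by positivity) (by nlinarith)

lemma sq_add_le_sq_mul_add {a x y : ℝ} (ha : 1 ≤ a) (h : 0 ≤ x * (x + y)) :
    (x + y) ^ 2 ≤ (a * x + y) ^ 2 := by
  have key : (a * x + y) ^ 2 - (x + y) ^ 2 = (a - 1) * ((a - 1) * x ^ 2 + 2 * (x * (x + y))) := by
    ring
  have ha' : 0 ≤ a - 1 := sub_nonneg.2 ha
  have : 0 ≤ (a * x + y) ^ 2 - (x + y) ^ 2 := by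
    rw [key]
    exact mul_nonneg ha' (by positivity)
  linarith

section Cone

variable {β : ℝ} {v : Fin 2 → ℝ}

lemma exists_coords_of_mem_Ku (hv : v ∈ Ku β) :
    ∃ c₁ c₂ : ℝ, 0 ≤ c₁ * c₂ ∧ v 0 = c₁ + c₂ ∧ v 1 = -β * c₁ + (1 + 2 * β) * c₂ := by
  obtain ⟨c₁, c₂, hc, rfl⟩ := hv
  exact ⟨c₁, c₂, hc, by simp, by simp; ring⟩

lemma mul_add_nonneg_of_mem_Ku (hβ0 : 0 ≤ β) (hβ1 : β ≤ 1) (hv : v ∈ Ku β) : 0 ≤ v 0 * (v 0 + v 1) := by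
  obtain ⟨c₁, c₂, hc, h0, h1⟩ := exists_coords_of_mem_Ku hv
  have key : v 0 * (v 0 + v 1) = (1 - β) * c₁ ^ 2 + (3 + β) * (c₁ * c₂) + (2 + 2 * β) * c₂ ^ 2 := by
    rw [h0, h1]
    ring
  rw [key]
  have : 0 ≤ 1 - β := by linarith
  have : 0 ≤ 3 + β := by linarith
  have : 0 ≤ 2 + 2 * β := by linarith
  positivity

lemma sq_norm_le_sq_norm_mulVec_one_of_mem_Ku (hβ0 : 0 ≤ β) (hβ1 : β ≤ 1) (hv : v ∈ Ku β) :
    ((1 - β) ^ 2 + 1) * (v 0 ^ 2 + v 1 ^ 2) ≤ (β ^ 2 + 1) * ((v 0 + v 1) ^ 2 + v 0 ^ 2) := by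
  obtain ⟨c₁, c₂, hc, h0, h1⟩ := exists_coords_of_mem_Ku hv
  have key : (β ^ 2 + 1) * ((v 0 + v 1) ^ 2 + v 0 ^ 2) - ((1 - β) ^ 2 + 1) * (v 0 ^ 2 + v 1 ^ 2)
      = 2 * (1 + 4 * β + 2 * β ^ 2 - 3 * β ^ 3) * (c₁ * c₂)
        + (1 + 4 * β + 7 * β ^ 2 + 12 * β ^ 3) * c₂ ^ 2 := by
    rw [h0, h1]
    ring
  have : 0 ≤ 1 + 4 * β + 2 * β ^ 2 - 3 * β ^ 3 := by nlinarith [pow_le_one₀ hβ0 hβ1 (n := 2)]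
  have : 0 ≤ 2 * (1 + 4 * β + 2 * β ^ 2 - 3 * β ^ 3) * (c₁ * c₂)
      + (1 + 4 * β + 7 * β ^ 2 + 12 * β ^ 3) * c₂ ^ 2 := by positivity
  linarith

lemma muBar_mul_enorm2_le (hβ0 : 0 ≤ β) (hβ1 : β ≤ 1) {a : ℝ} (ha : 1 ≤ a) (hv : v ∈ Ku β) :
    muBar β * enorm2 v ≤ enorm2 (!![a, 1; 1, 0] *ᵥ v) := by
  rw [enorm2_mulVec, enorm2]
  refine mul_sqrt_le_sqrt (by unfold muBar; positivity) ?_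
  rw [muBar, div_pow, Real.sq_sqrt (by positivity), Real.sq_sqrt (by positivity),
    div_mul_eq_mul_div, div_le_iff₀' (by positivity)]
  calc ((1 - β) ^ 2 + 1) * (v 0 ^ 2 + v 1 ^ 2)
      ≤ (β ^ 2 + 1) * ((v 0 + v 1) ^ 2 + v 0 ^ 2) :=
        sq_norm_le_sq_norm_mulVec_one_of_mem_Ku hβ0 hβ1 hv
    _ ≤ (β ^ 2 + 1) * ((a * v 0 + v 1) ^ 2 + v 0 ^ 2) := by
        have := sq_add_le_sq_mul_add ha (mul_add_nonneg_of_mem_Ku hβ0 hβ1 hv)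
        gcongr ?_ * (?_ + _)

end Cone

theorem stmt3 (β : ℝ) (hβ : β ∈ Set.Ioc (0 : ℝ) 0.1) :
    1 < Real.sqrt ((1 - β) ^ 2 + 1) / Real.sqrt (β ^ 2 + 1) ∧
    ∀ a : ℕ, 1 ≤ a → ∀ v ∈ Ku β,
      Real.sqrt ((1 - β) ^ 2 + 1) / Real.sqrt (β ^ 2 + 1) * enorm2 v ≤
        enorm2 ((!![(a : ℝ), 1; 1, 0]).mulVec v) ∧
      enorm2 ((!![(a : ℝ), 1; 1, 0]).mulVec v) ≤
        (((a : ℝ) + Real.sqrt (4 + (a : ℝ) ^ 2)) / 2) * enorm2 v := by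
  obtain ⟨hβ0, hβ1⟩ := hβ
  norm_num at hβ1
  refine ⟨one_lt_muBar (by linarith), fun a ha v hv => ⟨?_, ?_⟩⟩
  · exact muBar_mul_enorm2_le hβ0.le (by linarith) (by exact_mod_cast ha) hv
  · exact enorm2_mulVec_le a.cast_nonneg v
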